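/- Fix T ⊆ [n] with n ∈ T. The number of signed permutations (ω,ε) of [n] with ω(1) ∈ T and all right-to-left maxima unbarred is (2|T|−1)·1·3⋯(2n−3), and the number of signed permutations in D_n with ω(1) ∉ T ∪ {n} and all right-to-left maxima unbarred is (n−|T|)·1·3⋯(2n−3). -/

import Mathlib

/-!
Choosing the signs is free away from the right-to-left maxima, so the count is a sum of
`2 ^ (number of positions that are not right-to-left maxima)` over permutations. Write a
permutation of `[n+1]` as its first value `v` followed by the standardisation `σ` of the rest:
the right-to-left maxima after the first position are those of `σ`, and the first position is
one iff `v = n+1`. Hence the weight of `(v, σ)` is that of `σ`, doubled unless `v = n+1`, and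
induction gives `∑_σ 2^(non-maxima) = 1·3⋯(2n-1)`. In type `D`, the first position is not a
maximum, so its sign is fixed by the parity and exactly cancels the doubling.
-/

open Finset

section Signs

variable {ι G : Type*} [Fintype ι] [DecidableEq ι] [Fintype G]

-- The decidability instances are parameters because over `Fin n` elaboration picks
-- `Nat.decidableForallFin`, which is not reducibly equal to the generic instance.
theorem card_filter_forall_mem_eq (S : Finset ι) (a : G)
    [DecidablePred fun ε : ι → G => ∀ i ∈ S, ε i = a] :
    #{ε : ι → G | ∀ i ∈ S, ε i = a} = Fintype.card G ^ #Sᶜ := by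
  have : ({ε : ι → G | ∀ i ∈ S, ε i = a} : Finset _)
      = Fintype.piFinset (fun i => if i ∈ S then {a} else univ) := by
    ext ε
    simp only [mem_filter, mem_univ, true_and, Fintype.mem_piFinset]
    refine forall_congr' fun i => ?_
    split_ifs with hi <;> simp [hi]
  rw [this, Fintype.card_piFinset]
  simp only [apply_ite card, card_singleton, card_univ, prod_ite, prod_const_one, one_mul,
    prod_const]
  rw [filter_not, filter_mem_eq_inter, univ_inter, compl_eq_univ_sdiff]

theorem card_filter_prod_eq_and_forall_mem_eq [CommGroup G] {S : Finset ι} {i₀ : ι}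
    (hi₀ : i₀ ∉ S) (a b : G) [DecidablePred fun ε : ι → G => ∏ i, ε i = b ∧ ∀ i ∈ S, ε i = a] :
    #{ε : ι → G | ∏ i, ε i = b ∧ ∀ i ∈ S, ε i = a} = Fintype.card G ^ (#Sᶜ - 1) := by
  classical
  have prod_update (ε : ι → G) (x : G) :
      ∏ i, Function.update ε i₀ x i = x * (ε i₀)⁻¹ * ∏ i, ε i := by
    rw [prod_update_of_mem (mem_univ i₀), ← mul_prod_erase univ ε (mem_univ i₀),
      sdiff_singleton_eq_erase, mul_assoc x, inv_mul_cancel_left]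
  have ne_of_mem {i : ι} (hi : i ∈ S) : i ≠ i₀ := ne_of_mem_of_not_mem hi hi₀
  -- The product constraint determines `ε i₀`, so resetting `ε i₀` to `a` is a bijection onto
  -- the vectors that equal `a` on `insert i₀ S`.
  rw [← card_erase_of_mem (mem_compl.2 hi₀), ← compl_insert,
    ← card_filter_forall_mem_eq (insert i₀ S) a]
  refine card_nbij' (fun ε => Function.update ε i₀ a)
    (fun ε => Function.update ε i₀ (b * (∏ i, ε i)⁻¹ * a)) ?_ ?_ ?_ ?_ <;>
    simp only [Set.MapsTo, Set.LeftInvOn, mem_coe, mem_filter, mem_univ, true_and, mem_insert,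
      forall_eq_or_imp]
  · rintro ε ⟨-, hS⟩
    refine ⟨Function.update_self .., fun i hi => ?_⟩
    rw [Function.update_of_ne (ne_of_mem hi), hS i hi]
  · rintro ε ⟨hε₀, hS⟩
    refine ⟨?_, fun i hi => ?_⟩
    · rw [prod_update, hε₀]; group
    · rw [Function.update_of_ne (ne_of_mem hi), hS i hi]
  · rintro ε ⟨hprod, -⟩
    rw [Function.update_idem, prod_update, hprod]
    convert Function.update_eq_self i₀ ε using 2
    group
  · rintro ε ⟨hε₀, -⟩
    rw [Function.update_idem, ← hε₀, Function.update_eq_self]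

end Signs

theorem card_filter_prod_and {α β : Type*} [Fintype α] [Fintype β] (P : α → Prop)
    (Q : α → β → Prop) [DecidablePred P] [∀ a, DecidablePred (Q a)] :
    #{p : α × β | P p.1 ∧ Q p.1 p.2} = ∑ a with P a, #{b | Q a b} := by
  rw [card_filter, Fintype.sum_prod_type, sum_filter]
  refine sum_congr rfl fun a _ => ?_
  split_ifs with h <;> simp only [h, true_and, false_and, card_filter, if_false, sum_const_zero]

theorem sum_ite_eq_one_two {α : Type*} [DecidableEq α] {U : Finset α} {a : α} (ha : a ∈ U) :
    ∑ v ∈ U, (if v = a then 1 else 2) = 2 * #U - 1 := by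
  rw [← add_sum_erase U _ ha, if_pos rfl,
    sum_congr rfl fun v hv => if_neg (ne_of_mem_erase hv), sum_const, card_erase_of_mem ha,
    smul_eq_mul]
  have := card_pos.2 ⟨a, ha⟩
  omega

section RtlMaxima

variable {α : Type*} [LinearOrder α] {n : ℕ}

def rtlMaxima (f : Fin n → α) : Finset (Fin n) := {i | ∀ j, i < j → f j < f i}

@[simp]
theorem mem_rtlMaxima {f : Fin n → α} {i : Fin n} :
    i ∈ rtlMaxima f ↔ ∀ j, i < j → f j < f i := by
  simp [rtlMaxima]

theorem rtlMaxima_comp_of_strictMono {β : Type*} [LinearOrder β] {g : α → β}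
    (hg : StrictMono g) (f : Fin n → α) : rtlMaxima (g ∘ f) = rtlMaxima f := by
  ext i
  simp [hg.lt_iff_lt]

theorem succ_mem_rtlMaxima_iff {f : Fin (n + 1) → α} {i : Fin n} :
    i.succ ∈ rtlMaxima f ↔ i ∈ rtlMaxima (f ∘ Fin.succ) := by
  simp only [mem_rtlMaxima, Function.comp_apply]
  refine ⟨fun h j hij => h _ (Fin.succ_lt_succ_iff.2 hij), fun h j hij => ?_⟩
  obtain ⟨j, rfl⟩ := Fin.exists_succ_eq.2 (Fin.ne_zero_of_lt hij)
  exact h j (Fin.succ_lt_succ_iff.1 hij)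

theorem card_compl_rtlMaxima_succ (f : Fin (n + 1) → α) :
    #(rtlMaxima f)ᶜ = #(rtlMaxima (f ∘ Fin.succ))ᶜ + if 0 ∈ rtlMaxima f then 0 else 1 := by
  have h : ∀ {m} (S : Finset (Fin m)), #Sᶜ = #{i | i ∉ S} := fun S => by
    rw [← compl_filter, filter_univ_mem]
  rw [h, h, Fin.card_filter_univ_succ', add_comm]
  simp only [succ_mem_rtlMaxima_iff, ite_not]

theorem zero_mem_rtlMaxima_iff (ω : Equiv.Perm (Fin (n + 1))) :
    0 ∈ rtlMaxima ω ↔ ω 0 = Fin.last n := by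
  rw [mem_rtlMaxima]
  refine ⟨fun h => ?_, fun h j hj => h ▸ (Fin.le_last _).lt_of_ne ?_⟩
  · by_contra hne
    obtain ⟨j, hj⟩ := ω.surjective (Fin.last n)
    have : 0 < j := Fin.pos_of_ne_zero (by rintro rfl; exact hne hj)
    exact (h j this).not_ge (hj ▸ Fin.le_last _)
  · rw [← h]; exact ω.injective.ne hj.ne'

end RtlMaxima

section PermCons

variable {n : ℕ}

def permCons (v : Fin (n + 1)) (σ : Equiv.Perm (Fin n)) : Equiv.Perm (Fin (n + 1)) :=
  (finSuccEquiv n).trans (σ.optionCongr.trans (finSuccEquiv' v).symm)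

@[simp]
theorem permCons_apply_zero (v : Fin (n + 1)) (σ : Equiv.Perm (Fin n)) : permCons v σ 0 = v := by
  simp [permCons]

@[simp]
theorem permCons_apply_succ (v : Fin (n + 1)) (σ : Equiv.Perm (Fin n)) (i : Fin n) :
    permCons v σ i.succ = v.succAbove (σ i) := by
  simp [permCons]

theorem permCons_injective :
    Function.Injective (fun p : Fin (n + 1) × Equiv.Perm (Fin n) => permCons p.1 p.2) := by
  rintro ⟨v, σ⟩ ⟨v', σ'⟩ h
  obtain rfl : v = v' := by simpa using DFunLike.congr_fun h 0
  simpa [Equiv.ext_iff] using fun i : Fin n => DFunLike.congr_fun h i.succ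

noncomputable def permConsEquiv (n : ℕ) :
    Fin (n + 1) × Equiv.Perm (Fin n) ≃ Equiv.Perm (Fin (n + 1)) :=
  .ofBijective _ <| (Fintype.bijective_iff_injective_and_card _).2
    ⟨permCons_injective, by simp [Fintype.card_perm, Nat.factorial_succ]⟩

theorem permConsEquiv_apply (p : Fin (n + 1) × Equiv.Perm (Fin n)) :
    permConsEquiv n p = permCons p.1 p.2 := rfl

theorem sum_filter_apply_zero_mem {M : Type*} [AddCommMonoid M] (U : Finset (Fin (n + 1)))
    (f : Equiv.Perm (Fin (n + 1)) → M) :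
    ∑ ω with ω 0 ∈ U, f ω = ∑ v ∈ U, ∑ σ, f (permCons v σ) := by
  rw [sum_filter, ← (permConsEquiv n).sum_comp, Fintype.sum_prod_type]
  simp only [permConsEquiv_apply, permCons_apply_zero, sum_ite_irrel, sum_const_zero, sum_ite_mem,
    univ_inter]

theorem card_compl_rtlMaxima_permCons (v : Fin (n + 1)) (σ : Equiv.Perm (Fin n)) :
    #(rtlMaxima (permCons v σ))ᶜ = #(rtlMaxima σ)ᶜ + if v = Fin.last n then 0 else 1 := by
  have tail : ⇑(permCons v σ) ∘ Fin.succ = v.succAbove ∘ σ := funext (permCons_apply_succ v σ)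
  rw [card_compl_rtlMaxima_succ, tail,
    rtlMaxima_comp_of_strictMono (Fin.strictMono_succAbove v)]
  simp only [zero_mem_rtlMaxima_iff, permCons_apply_zero]

theorem sum_two_pow_card_compl_rtlMaxima_permCons (v : Fin (n + 1)) :
    ∑ σ : Equiv.Perm (Fin n), 2 ^ #(rtlMaxima (permCons v σ))ᶜ
      = (if v = Fin.last n then 1 else 2) * ∑ σ : Equiv.Perm (Fin n), 2 ^ #(rtlMaxima σ)ᶜ := by
  rw [mul_sum]
  refine sum_congr rfl fun σ _ => ?_
  rw [card_compl_rtlMaxima_permCons]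
  split_ifs <;> ring

theorem sum_two_pow_card_compl_rtlMaxima (n : ℕ) :
    ∑ σ : Equiv.Perm (Fin n), 2 ^ #(rtlMaxima σ)ᶜ = ∏ k ∈ range n, (2 * k + 1) := by
  induction n with
  | zero => rfl
  | succ n ih =>
    rw [← (permConsEquiv n).sum_comp, Fintype.sum_prod_type]
    simp only [permConsEquiv_apply, sum_two_pow_card_compl_rtlMaxima_permCons, ← sum_mul,
      sum_ite_eq_one_two (mem_univ (Fin.last n)), ih, prod_range_succ, card_univ,
      Fintype.card_fin]
    rw [show 2 * (n + 1) - 1 = 2 * n + 1 by omega, mul_comm]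

theorem card_signedPerm_apply_zero_mem_of_last_mem {U : Finset (Fin (n + 1))}
    (hU : Fin.last n ∈ U) :
    #{p : Equiv.Perm (Fin (n + 1)) × (Fin (n + 1) → ℤˣ) |
        p.1 0 ∈ U ∧ ∀ i ∈ rtlMaxima p.1, p.2 i = 1}
      = (2 * #U - 1) * ∏ k ∈ range n, (2 * k + 1) := by
  rw [card_filter_prod_and (fun ω : Equiv.Perm (Fin (n + 1)) => ω 0 ∈ U)
    fun ω (ε : Fin (n + 1) → ℤˣ) => ∀ i ∈ rtlMaxima ω, ε i = 1]
  simp only [card_filter_forall_mem_eq, Fintype.card_units_int, sum_filter_apply_zero_mem,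
    sum_two_pow_card_compl_rtlMaxima_permCons, ← sum_mul, sum_ite_eq_one_two hU,
    sum_two_pow_card_compl_rtlMaxima]

theorem card_evenSignedPerm_apply_zero_mem_of_last_notMem {U : Finset (Fin (n + 1))}
    (hU : Fin.last n ∉ U) :
    #{p : Equiv.Perm (Fin (n + 1)) × (Fin (n + 1) → ℤˣ) |
        p.1 0 ∈ U ∧ (∏ i, p.2 i = 1 ∧ ∀ i ∈ rtlMaxima p.1, p.2 i = 1)}
      = #U * ∏ k ∈ range n, (2 * k + 1) := by
  rw [card_filter_prod_and (fun ω : Equiv.Perm (Fin (n + 1)) => ω 0 ∈ U)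
    fun ω (ε : Fin (n + 1) → ℤˣ) => ∏ i, ε i = 1 ∧ ∀ i ∈ rtlMaxima ω, ε i = 1,
    sum_filter_apply_zero_mem, ← sum_two_pow_card_compl_rtlMaxima, ← smul_eq_mul, ← sum_const]
  refine sum_congr rfl fun v hv => sum_congr rfl fun σ _ => ?_
  have hv : v ≠ Fin.last n := ne_of_mem_of_not_mem hv hU
  have h0 : 0 ∉ rtlMaxima (permCons v σ) := by
    rwa [zero_mem_rtlMaxima_iff, permCons_apply_zero]
  rw [card_filter_prod_eq_and_forall_mem_eq h0, Fintype.card_units_int,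
    card_compl_rtlMaxima_permCons, if_neg hv, Nat.add_sub_cancel]

end PermCons

/-- Fix `T ⊆ [n]` with `n ∈ T`.  The number of signed permutations `(ω,ε)` of `[n]`
with `ω(1) ∈ T` and all right-to-left maxima unbarred is `(2|T|-1)·1·3⋯(2n-3)`,
and the number of even-signed permutations (`∏εᵢ = 1`, i.e. in `D_n`) with
`ω(1) ∉ T ∪ {n}` and all right-to-left maxima unbarred is `(n-|T|)·1·3⋯(2n-3)`. -/
theorem card_interpolating_mem_T {n : ℕ} (hn : 2 ≤ n)
    (T : Finset (Fin n)) (hT : (⟨n - 1, by omega⟩ : Fin n) ∈ T) :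
    ((Finset.univ : Finset (Equiv.Perm (Fin n) × (Fin n → ℤˣ))).filter
        (fun p => p.1 ⟨0, by omega⟩ ∈ T ∧
          ∀ i : Fin n, (∀ j : Fin n, i < j → p.1 j < p.1 i) → p.2 i = 1)).card
      = (2 * T.card - 1) * ∏ k ∈ Finset.range (n - 1), (2 * k + 1) ∧
    ((Finset.univ : Finset (Equiv.Perm (Fin n) × (Fin n → ℤˣ))).filter
        (fun p => (∏ i, p.2 i) = 1 ∧
          p.1 ⟨0, by omega⟩ ∉ T ∧ p.1 ⟨0, by omega⟩ ≠ ⟨n - 1, by omega⟩ ∧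
          ∀ i : Fin n, (∀ j : Fin n, i < j → p.1 j < p.1 i) → p.2 i = 1)).card
      = (n - T.card) * ∏ k ∈ Finset.range (n - 1), (2 * k + 1) := by
  obtain ⟨m, rfl⟩ : ∃ m, n = m + 1 := ⟨n - 1, by omega⟩
  have hlast : Fin.last m ∈ T := hT
  constructor
  · convert card_signedPerm_apply_zero_mem_of_last_mem hlast using 2
    · exact filter_congr fun p _ => by simp
    · rfl
  · convert card_evenSignedPerm_apply_zero_mem_of_last_notMem (notMem_compl.2 hlast) using 2
    · exact filter_congr fun p _ => by
        simp only [mem_compl, mem_rtlMaxima, Fin.zero_eta]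
        exact ⟨fun ⟨h1, h2, _, h4⟩ => ⟨h2, h1, h4⟩,
          fun ⟨h2, h1, h4⟩ => ⟨h1, h2, fun h => h2 (h ▸ hT), h4⟩⟩
    · rw [card_compl, Fintype.card_fin]
    · rfl
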